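/- Define the radialization operator P on functions f : F_k → ℂ by P(f)(x) = (1/e_n)·∑_{w ∈ E_n} f(w) where n = |x|. Then for all n ≥ 1 and all f, P(f ∗ χ_n) = P(f) ∗ χ_n. -/

import Mathlib

/-- The sphere of radius `n` about the identity in the free group `F_k`:
the finite set of elements of reduced word length `n`. -/
noncomputable def sphere (k n : ℕ) : Finset (FreeGroup (Fin k)) :=
  (Set.Finite.preimage (Function.Injective.injOn FreeGroup.toWord_injective)
    (List.finite_length_eq ((Fin k) × Bool) n)).toFinset

/-- `χ_n = ∑_{|x| = n} x`, the sum of the sphere of radius `n` in `ℂ[F_k]`. -/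
noncomputable def chi (k n : ℕ) : MonoidAlgebra ℂ (FreeGroup (Fin k)) :=
  ∑ x ∈ sphere k n, MonoidAlgebra.of ℂ (FreeGroup (Fin k)) x

/-- The polynomials `p_0 = 1`, `p_1 = z`, `p_2 = z² - 2k`,
`p_{n+1} = z p_n - (2k-1) p_{n-1}` for `n ≥ 2`. -/
noncomputable def p (k : ℕ) : ℕ → Polynomial ℂ
  | 0 => 1
  | 1 => Polynomial.X
  | 2 => Polynomial.X ^ 2 - Polynomial.C ((2 * k : ℕ) : ℂ)
  | (n + 3) => Polynomial.X * p k (n + 2) - Polynomial.C ((2 * k - 1 : ℕ) : ℂ) * p k (n + 1)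

/-- `e_0 = 1` and `e_n = 2k(2k-1)^{n-1}` for `n ≥ 1`, the cardinality of the sphere. -/
def eN (k n : ℕ) : ℕ := if n = 0 then 1 else 2 * k * (2 * k - 1) ^ (n - 1)

/-- The radialization operator `P(f)(x) = (1/e_{|x|})·∑_{w ∈ E_{|x|}} f(w)`. -/
noncomputable def Prad (k : ℕ) (f : FreeGroup (Fin k) → ℂ) : FreeGroup (Fin k) → ℂ :=
  fun x => ((eN k x.toWord.length : ℂ))⁻¹ * ∑ w ∈ sphere k x.toWord.length, f w

/-!
Right multiplication by a letter moves a reduced word `x ≠ 1` one step down (for the inverse of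
its last letter) or one step up (for the other `2k - 1` letters), so the number of `z ∈ E_1`
with `|xz| = i` depends only on `|x|`. Counting the pairs `(w, z) ∈ E_m × E_1` with `wz ∈ E_i`
from both ends then gives `|E_{m+1}| = c_m |E_m|`, the three-term relation
`χ_m χ_1 = χ_{m+1} + c_{m-1} χ_{m-1}` and the commutation `P(f ∗ χ_1) = P(f) ∗ χ_1`; the relation
propagates the commutation to every `χ_n`.
-/

open Finset FreeGroup

theorem Finset.sum_sum_filter_mul_mem {G M : Type*} [Group G] [DecidableEq G] [AddCommMonoid M]
    {S : Finset G} (hS : ∀ z ∈ S, z⁻¹ ∈ S) (A B : Finset G) (g : G → M) :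
    ∑ w ∈ A, ∑ z ∈ S with w * z ∈ B, g (w * z) = ∑ u ∈ B, #{z ∈ S | u * z ∈ A} • g u := by
  have hpairs : ∑ x ∈ A ×ˢ S with x.1 * x.2 ∈ B, g (x.1 * x.2) =
      ∑ y ∈ B ×ˢ S with y.1 * y.2 ∈ A, g y.1 :=
    sum_nbij' (fun x => (x.1 * x.2, x.2⁻¹)) (fun y => (y.1 * y.2, y.2⁻¹))
      (by simp +contextual [hS]) (by simp +contextual [hS]) (by simp) (by simp) (by simp)
  rw [sum_filter, sum_product, sum_filter, sum_product] at hpairs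
  simpa only [← sum_filter, sum_const] using hpairs

namespace FreeGroup

variable {α : Type*} [DecidableEq α]

theorem mk_singleton_injective : Function.Injective fun a : α × Bool => mk [a] := by
  intro a b h
  simpa [toWord_mk, reduce_singleton] using congrArg toWord h

theorem toWord_mul_mk_singleton_of_getLast?_ne {x : FreeGroup α} {a : α × Bool}
    (h : x.toWord.getLast? ≠ some (a.1, !a.2)) :
    (x * mk [a]).toWord = x.toWord ++ [a] := by
  rw [toWord_mul, toWord_mk, reduce_singleton]
  refine IsReduced.reduce_eq (List.isChain_append.2 ⟨isReduced_toWord, IsReduced.singleton, ?_⟩)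
  rintro ⟨b₁, b₂⟩ hb c hc rfl
  obtain rfl : c = a := by simpa using hc.symm
  cases b₂ <;> cases h' : c.2 <;> simp_all

theorem norm_mul_mk_singleton_of_getLast?_eq {x : FreeGroup α} {a : α × Bool}
    (h : x.toWord.getLast? = some (a.1, !a.2)) :
    norm (x * mk [a]) + 1 = norm x := by
  obtain ⟨L, hL⟩ := List.getLast?_eq_some_iff.1 h
  have hred : IsReduced L := isReduced_toWord.infix (hL ▸ List.infix_append [] L _)
  have hstep : Red.Step (L ++ [(a.1, !a.2), a]) L := by
    simpa using Red.Step.not_rev (L₁ := L) (L₂ := []) (x := a.1) (b := a.2)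
  rw [norm, norm, toWord_mul, toWord_mk, reduce_singleton, hL, List.append_assoc,
    List.singleton_append, reduce.Step.eq hstep, hred.reduce_eq, List.length_append,
    List.length_singleton]

theorem norm_mul_mk_singleton (x : FreeGroup α) (a : α × Bool) :
    norm (x * mk [a]) =
      if x.toWord.getLast? = some (a.1, !a.2) then norm x - 1 else norm x + 1 := by
  split_ifs with h
  · have := norm_mul_mk_singleton_of_getLast?_eq h
    omega
  · rw [norm, toWord_mul_mk_singleton_of_getLast?_ne h, List.length_append]
    rfl

end FreeGroup

section Sphere

variable {k : ℕ}

theorem mem_sphere {n : ℕ} {x : FreeGroup (Fin k)} : x ∈ sphere k n ↔ x.norm = n := by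
  simp [sphere, FreeGroup.norm]

theorem sphere_zero : sphere k 0 = {1} := by
  ext x
  simp [mem_sphere, FreeGroup.norm_eq_zero]

theorem inv_mem_sphere {n : ℕ} {z : FreeGroup (Fin k)} (hz : z ∈ sphere k n) :
    z⁻¹ ∈ sphere k n := by
  rwa [mem_sphere, norm_inv_eq, ← mem_sphere]

theorem sphere_one_eq_image : sphere k 1 = univ.image fun a : Fin k × Bool => mk [a] := by
  ext x
  rw [mem_sphere, FreeGroup.norm, List.length_eq_one_iff, mem_image]
  constructor
  · rintro ⟨a, ha⟩
    exact ⟨a, mem_univ a, toWord_injective (by rw [toWord_mk, reduce_singleton, ha])⟩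
  · rintro ⟨a, -, rfl⟩
    exact ⟨a, by rw [toWord_mk, reduce_singleton]⟩

theorem card_sphere_one : #(sphere k 1) = 2 * k := by
  rw [sphere_one_eq_image, card_image_of_injective _ mk_singleton_injective, card_univ,
    Fintype.card_prod, Fintype.card_fin, Fintype.card_bool, mul_comm]

theorem sum_sphere_one {M : Type*} [AddCommMonoid M] (g : FreeGroup (Fin k) → M) :
    ∑ z ∈ sphere k 1, g z = ∑ a : Fin k × Bool, g (mk [a]) := by
  rw [sphere_one_eq_image, sum_image fun a _ b _ h => mk_singleton_injective h]

theorem norm_mul_of_mem_sphere_one (x : FreeGroup (Fin k)) {z : FreeGroup (Fin k)}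
    (hz : z ∈ sphere k 1) : (x * z).norm = x.norm + 1 ∨ (x * z).norm + 1 = x.norm := by
  rw [sphere_one_eq_image, mem_image] at hz
  obtain ⟨a, -, rfl⟩ := hz
  rw [norm_mul_mk_singleton]
  split_ifs with h
  · have := norm_mul_mk_singleton_of_getLast?_eq h
    omega
  · exact Or.inl rfl

theorem sum_sphere_one_norm_mul {M : Type*} [AddCommMonoid M] {x : FreeGroup (Fin k)}
    (hx : x ≠ 1) (φ : ℕ → M) :
    ∑ z ∈ sphere k 1, φ (x * z).norm = φ (x.norm - 1) + (2 * k - 1) • φ (x.norm + 1) := by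
  obtain ⟨ℓ, hℓ⟩ : ∃ ℓ, x.toWord.getLast? = some ℓ :=
    ⟨_, List.getLast?_eq_some_getLast (by rwa [ne_eq, toWord_eq_nil_iff])⟩
  have hcancel (a : Fin k × Bool) : x.toWord.getLast? = some (a.1, !a.2) ↔ a = (ℓ.1, !ℓ.2) := by
    rw [hℓ, Option.some.injEq]
    constructor <;> rintro rfl <;> simp
  rw [sum_sphere_one, ← add_sum_erase _ _ (mem_univ (ℓ.1, !ℓ.2)), norm_mul_mk_singleton,
    if_pos ((hcancel _).2 rfl), sum_congr rfl fun a ha => by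
      rw [norm_mul_mk_singleton, if_neg (mt (hcancel a).1 (ne_of_mem_erase ha))], sum_const,
    card_erase_of_mem (mem_univ _), card_univ, Fintype.card_prod, Fintype.card_fin,
    Fintype.card_bool, mul_comm k]

/-- `c_j`: the number of `z ∈ E_1` with `|xz| = j + 1` when `|x| = j`. -/
def forwardDegree (k j : ℕ) : ℕ := if j = 0 then 2 * k else 2 * k - 1

theorem forwardDegree_succ (k j : ℕ) : forwardDegree k (j + 1) = 2 * k - 1 := rfl

theorem forwardDegree_pos (hk : 0 < k) (j : ℕ) : 0 < forwardDegree k j := by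
  unfold forwardDegree
  split_ifs <;> omega

theorem card_filter_mul_mem_sphere_pred {j : ℕ} {x : FreeGroup (Fin k)} (hx : x.norm = j + 1) :
    #{z ∈ sphere k 1 | x * z ∈ sphere k j} = 1 := by
  have hx1 : x ≠ 1 := by rintro rfl; simp at hx
  simp only [card_filter, mem_sphere]
  rw [sum_sphere_one_norm_mul hx1 fun i => if i = j then 1 else 0, hx]
  simp [show j + 1 + 1 ≠ j by omega]

theorem card_filter_mul_mem_sphere_succ {j : ℕ} {x : FreeGroup (Fin k)} (hx : x.norm = j) :
    #{z ∈ sphere k 1 | x * z ∈ sphere k (j + 1)} = forwardDegree k j := by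
  rcases eq_or_ne x 1 with rfl | hx1
  · subst hx
    rw [filter_true_of_mem fun z hz => by simpa using hz, card_sphere_one]
    rfl
  · have hj : j ≠ 0 := by rwa [← hx, ne_eq, FreeGroup.norm_eq_zero]
    simp only [card_filter, mem_sphere]
    rw [sum_sphere_one_norm_mul hx1 fun i => if i = j + 1 then 1 else 0, hx]
    simp [forwardDegree, hj]

theorem card_sphere_succ (j : ℕ) : #(sphere k (j + 1)) = forwardDegree k j * #(sphere k j) := by
  have h := sum_sum_filter_mul_mem (S := sphere k 1) (fun _ => inv_mem_sphere) (sphere k j)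
    (sphere k (j + 1)) fun _ => 1
  simp only [sum_const, smul_eq_mul, mul_one] at h
  rw [sum_congr rfl fun w hw => card_filter_mul_mem_sphere_succ (mem_sphere.1 hw),
    sum_congr rfl fun u hu => card_filter_mul_mem_sphere_pred (mem_sphere.1 hu)] at h
  simpa [mul_comm] using h.symm

theorem eN_succ (k j : ℕ) : eN k (j + 1) = forwardDegree k j * eN k j := by
  rcases j with _ | j
  · simp [eN, forwardDegree]
  · simp only [eN, forwardDegree, Nat.add_eq_zero_iff, one_ne_zero, and_false, if_false,
      Nat.add_sub_cancel]
    ring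

theorem card_sphere (n : ℕ) : #(sphere k n) = eN k n := by
  induction n with
  | zero => simp [sphere_zero, eN]
  | succ j ih => rw [card_sphere_succ, ih, eN_succ]

theorem eN_pos (hk : 0 < k) (n : ℕ) : 0 < eN k n := by
  induction n with
  | zero => simp [eN]
  | succ j ih =>
    rw [eN_succ]
    exact Nat.mul_pos (forwardDegree_pos hk j) ih

theorem sum_sphere_succ_sum_sphere_one_mul {M : Type*} [AddCommMonoid M] (m : ℕ)
    (g : FreeGroup (Fin k) → M) :
    ∑ w ∈ sphere k (m + 1), ∑ z ∈ sphere k 1, g (w * z) =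
      ∑ u ∈ sphere k (m + 2), g u + forwardDegree k m • ∑ u ∈ sphere k m, g u := by
  have hsplit : ∀ w ∈ sphere k (m + 1), ∑ z ∈ sphere k 1, g (w * z) =
      ∑ z ∈ sphere k 1 with w * z ∈ sphere k (m + 2), g (w * z) +
        ∑ z ∈ sphere k 1 with w * z ∈ sphere k m, g (w * z) := by
    intro w hw
    rw [← sum_filter_add_sum_filter_not _ fun z => w * z ∈ sphere k (m + 2)]
    congr 1
    refine sum_congr (filter_congr fun z hz => ?_) fun _ _ => rfl
    have := norm_mul_of_mem_sphere_one w hz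
    simp only [mem_sphere, mem_sphere.1 hw] at this ⊢
    omega
  have hpred : ∀ u ∈ sphere k (m + 2),
      #{z ∈ sphere k 1 | u * z ∈ sphere k (m + 1)} • g u = g u := fun u hu => by
    rw [card_filter_mul_mem_sphere_pred (mem_sphere.1 hu), one_smul]
  have hsucc : ∀ u ∈ sphere k m,
      #{z ∈ sphere k 1 | u * z ∈ sphere k (m + 1)} • g u = forwardDegree k m • g u :=
    fun u hu => by rw [card_filter_mul_mem_sphere_succ (mem_sphere.1 hu)]
  rw [sum_congr rfl hsplit, sum_add_distrib, sum_sum_filter_mul_mem (fun _ => inv_mem_sphere),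
    sum_sum_filter_mul_mem (fun _ => inv_mem_sphere), sum_congr rfl hpred, sum_congr rfl hsucc,
    smul_sum]

end Sphere

section Radialization

variable {k : ℕ}

/-- The convolution `f ∗ χ_n`. -/
noncomputable def sphereConv (k n : ℕ) (f : FreeGroup (Fin k) → ℂ) : FreeGroup (Fin k) → ℂ :=
  fun x => ∑ y ∈ sphere k n, f (x * y)

theorem sphereConv_zero (f : FreeGroup (Fin k) → ℂ) : sphereConv k 0 f = f := by
  funext x
  simp [sphereConv, sphere_zero]

theorem sphereConv_sphereConv_one (m : ℕ) (f : FreeGroup (Fin k) → ℂ) :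
    sphereConv k (m + 1) (sphereConv k 1 f) =
      sphereConv k (m + 2) f + forwardDegree k m • sphereConv k m f := by
  funext x
  simp only [sphereConv, Pi.add_apply, Pi.smul_apply, mul_assoc]
  exact sum_sphere_succ_sum_sphere_one_mul m fun u => f (x * u)

theorem Prad_apply (f : FreeGroup (Fin k) → ℂ) (x : FreeGroup (Fin k)) :
    Prad k f x = (eN k x.norm : ℂ)⁻¹ * ∑ w ∈ sphere k x.norm, f w :=
  rfl

theorem Prad_add (f g : FreeGroup (Fin k) → ℂ) : Prad k (f + g) = Prad k f + Prad k g := by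
  funext x
  simp only [Prad_apply, Pi.add_apply, sum_add_distrib, mul_add]

theorem Prad_nsmul (c : ℕ) (f : FreeGroup (Fin k) → ℂ) : Prad k (c • f) = c • Prad k f := by
  funext x
  simp only [Prad_apply, Pi.smul_apply, ← smul_sum, mul_smul_comm]

theorem Prad_sphereConv_one (hk : 0 < k) (f : FreeGroup (Fin k) → ℂ) :
    Prad k (sphereConv k 1 f) = sphereConv k 1 (Prad k f) := by
  funext x
  rcases eq_or_ne x 1 with rfl | hx
  · have hP : ∀ y ∈ sphere k 1, Prad k f (1 * y) = (eN k 1 : ℂ)⁻¹ * ∑ w ∈ sphere k 1, f w :=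
      fun y hy => by rw [one_mul, Prad_apply, mem_sphere.1 hy]
    have he : (eN k 1 : ℂ) ≠ 0 := by exact_mod_cast (eN_pos hk 1).ne'
    rw [Prad_apply, FreeGroup.norm_one, sphere_zero, sum_singleton, sphereConv, sphereConv,
      sum_congr rfl hP, sum_const, card_sphere, nsmul_eq_mul, ← mul_assoc, mul_inv_cancel₀ he]
    simp [eN]
  · obtain ⟨m, hm⟩ : ∃ m, x.norm = m + 1 :=
      Nat.exists_eq_succ_of_ne_zero (by rwa [ne_eq, FreeGroup.norm_eq_zero])
    have hrhs := sum_sphere_one_norm_mul hx fun i => (eN k i : ℂ)⁻¹ * ∑ w ∈ sphere k i, f w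
    rw [hm, Nat.add_sub_cancel] at hrhs
    simp only [sphereConv, Prad_apply, hm] at hrhs ⊢
    rw [hrhs, sum_sphere_succ_sum_sphere_one_mul, eN_succ k (m + 1), eN_succ k m,
      forwardDegree_succ]
    have he : (eN k m : ℂ) ≠ 0 := by exact_mod_cast (eN_pos hk m).ne'
    have hc : (forwardDegree k m : ℂ) ≠ 0 := by exact_mod_cast (forwardDegree_pos hk m).ne'
    have hd : ((2 * k - 1 : ℕ) : ℂ) ≠ 0 := by norm_cast; omega
    simp only [Nat.cast_mul, nsmul_eq_mul]
    field_simp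
    ring

end Radialization

theorem stmt19_general (k : ℕ) (hk : 2 ≤ k) (n : ℕ) (f : FreeGroup (Fin k) → ℂ) :
    Prad k (fun x => ∑ y ∈ sphere k n, f (x * y)) =
      fun x => ∑ y ∈ sphere k n, Prad k f (x * y) := by
  show Prad k (sphereConv k n f) = sphereConv k n (Prad k f)
  induction n using Nat.twoStepInduction generalizing f with
  | zero => rw [sphereConv_zero, sphereConv_zero]
  | one => exact Prad_sphereConv_one (by omega) f
  | more m ih₀ ih₁ =>
    have h := congrArg (Prad k) (sphereConv_sphereConv_one m f)
    rw [Prad_add, Prad_nsmul, ih₁, Prad_sphereConv_one (by omega), ih₀,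
      sphereConv_sphereConv_one] at h
    exact (add_right_cancel h).symm

/-- `P(f ∗ χ_n) = P(f) ∗ χ_n` for all `n ≥ 1` and all `f`,
where `(f ∗ χ_n)(x) = ∑_{y ∈ E_n} f(xy)`. -/
theorem stmt19 (k : ℕ) (hk : 2 ≤ k) (n : ℕ) (hn : 1 ≤ n) (f : FreeGroup (Fin k) → ℂ) :
    Prad k (fun x => ∑ y ∈ sphere k n, f (x * y)) =
      fun x => ∑ y ∈ sphere k n, Prad k f (x * y) :=
  stmt19_general k hk n f
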